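/- For every m ≥ 3, the complete bipartite graph K_{m,m} admits a proper edge colouring with m colours in which some perfect matching is rainbow (its m edges all receive distinct colours). -/

import Mathlib

open SimpleGraph

variable {V : Type*} {W : Type*}

/-- The direct (tensor) product of two simple graphs. -/
def tensorProd (G : SimpleGraph V) (H : SimpleGraph W) : SimpleGraph (V × W) where
  Adj a b := G.Adj a.1 b.1 ∧ H.Adj a.2 b.2
  symm := ⟨fun _ _ h => ⟨G.adj_symm h.1, H.adj_symm h.2⟩⟩
  loopless := ⟨fun a h => G.loopless.irrefl a.1 h.1⟩

instance tensorProd.adjDecidable (G : SimpleGraph V) (H : SimpleGraph W)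
    [DecidableRel G.Adj] [DecidableRel H.Adj] : DecidableRel (tensorProd G H).Adj :=
  fun _ _ => instDecidableAnd

/-- A proper edge colouring with `n` colours, given as a symmetric function on adjacent pairs. -/
def IsEdgeColoring (G : SimpleGraph V) (n : ℕ) (ce : V → V → Fin n) : Prop :=
  (∀ u v, G.Adj u v → ce u v = ce v u) ∧
  (∀ u v w, G.Adj u v → G.Adj u w → v ≠ w → ce u v ≠ ce u w)

/-- A proper total colouring with `n` colours. -/
def IsTotalColoring (G : SimpleGraph V) (n : ℕ) (cv : V → Fin n) (ce : V → V → Fin n) : Prop :=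
  (∀ u v, G.Adj u v → ce u v = ce v u) ∧
  (∀ u v, G.Adj u v → cv u ≠ cv v) ∧
  (∀ u v w, G.Adj u v → G.Adj u w → v ≠ w → ce u v ≠ ce u w) ∧
  (∀ u v, G.Adj u v → ce u v ≠ cv u ∧ ce u v ≠ cv v)

/-- The total chromatic number of a graph. -/
noncomputable def totalChromaticNumber (G : SimpleGraph V) : ℕ :=
  sInf {n | ∃ cv ce, IsTotalColoring G n cv ce}

/-- Adjacency of the crown graph. -/
def crownAdj {m : ℕ} : Fin m ⊕ Fin m → Fin m ⊕ Fin m → Prop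
  | Sum.inl k, Sum.inr t => k ≠ t
  | Sum.inr k, Sum.inl t => k ≠ t
  | _, _ => False

/-- The crown graph `J_{2m}`: `K_{m,m}` minus a perfect matching. -/
def crown (m : ℕ) : SimpleGraph (Fin m ⊕ Fin m) where
  Adj := crownAdj
  symm := ⟨by rintro (k|k) (t|t) h <;> simp only [crownAdj] at * <;> exact fun e => h e.symm⟩
  loopless := ⟨by rintro (k|k) h <;> simp only [crownAdj] at h⟩

instance crown.adjDecidable (m : ℕ) : DecidableRel (crown m).Adj := fun a b =>
  match a, b with
  | Sum.inl k, Sum.inr t => (inferInstance : Decidable (k ≠ t))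
  | Sum.inr k, Sum.inl t => (inferInstance : Decidable (k ≠ t))
  | Sum.inl _, Sum.inl _ => isFalse (fun h => h)
  | Sum.inr _, Sum.inr _ => isFalse (fun h => h)

/-!
Colour the edge `(a, b)` of `K_{m,m}` by the entry `L a b` of a Latin square `L` of order `m`;
a rainbow perfect matching is then a transversal of `L`. For odd `m` the addition table of
`ℤ/m` has the diagonal as a transversal, since `2` is invertible. For even `m ≥ 4`, prolong the
addition table of `ℤ/(m-1)` along its diagonal: the new symbol fills the diagonal, and the
transversal `a ↦ a + 1`, disjoint from the diagonal, extends by the new corner cell.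
-/

open Function

section LatinSquare

variable {α β α' β' : Type*}

def IsLatinSquare (L : α → α → β) : Prop :=
  (∀ a, Injective (L a)) ∧ ∀ b, Injective fun a => L a b

def IsTransversal (L : α → α → β) (σ : Equiv.Perm α) : Prop :=
  Injective fun a => L a (σ a)

theorem IsLatinSquare.congr {L : α → α → β} (hL : IsLatinSquare L) (e : α ≃ α') (f : β ≃ β') :
    IsLatinSquare fun a b => f (L (e.symm a) (e.symm b)) :=
  ⟨fun a => f.injective.comp ((hL.1 (e.symm a)).comp e.symm.injective),
    fun b => f.injective.comp ((hL.2 (e.symm b)).comp e.symm.injective)⟩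

theorem IsTransversal.congr {L : α → α → β} {σ : Equiv.Perm α} (hσ : IsTransversal L σ)
    (e : α ≃ α') (f : β ≃ β') :
    IsTransversal (fun a b => f (L (e.symm a) (e.symm b))) (e.permCongr σ) := by
  unfold IsTransversal
  simp only [Equiv.permCongr_apply, Equiv.symm_apply_apply]
  exact f.injective.comp (hσ.comp e.symm.injective)

/-- The values on non-edges are irrelevant. -/
def bipartiteColoring (L : α → α → β) : α ⊕ α → α ⊕ α → β
  | .inl a, .inr b | .inr b, .inl a => L a b
  | .inl a, .inl b | .inr a, .inr b => L a b

theorem IsLatinSquare.isEdgeColoring_bipartiteColoring {n : ℕ} {L : α → α → Fin n}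
    (hL : IsLatinSquare L) :
    IsEdgeColoring (completeBipartiteGraph α α) n (bipartiteColoring L) := by
  constructor
  · rintro (a | a) (b | b) h <;> simp_all [bipartiteColoring]
  · rintro (a | a) (b | b) (c | c) hb hc hbc <;>
      simp_all [bipartiteColoring, (hL.1 _).eq_iff, (hL.2 _).eq_iff]

variable [DecidableEq α]

/-- The prolongation of `L` along the transversal `τ`: the cells of `τ` receive the new symbol
`none`, and their old symbols move to the new row and column. -/
def prolong (L : α → α → β) (τ : Equiv.Perm α) : Option α → Option α → Option β
  | some a, some b => if b = τ a then none else some (L a b)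
  | some a, none => some (L a (τ a))
  | none, some b => some (L (τ.symm b) b)
  | none, none => none

theorem isLatinSquare_prolong {L : α → α → β} {τ : Equiv.Perm α} (hL : IsLatinSquare L)
    (hτ : IsTransversal L τ) : IsLatinSquare (prolong L τ) := by
  have hτ' : Injective fun b => L (τ.symm b) b := by
    simpa [comp_def] using hτ.comp τ.symm.injective
  constructor
  · rintro (_ | a) (_ | b) (_ | c) h <;> simp only [prolong] at h <;> (try split_ifs at h) <;>
      simp_all [(hL.1 _).eq_iff, hτ'.eq_iff]
  · rintro (_ | b) (_ | a) (_ | c) h <;> simp only [prolong] at h <;> (try split_ifs at h) <;>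
      simp_all [(hL.2 _).eq_iff, hτ.eq_iff, Equiv.symm_apply_eq]

theorem isTransversal_prolong {L : α → α → β} {τ ρ : Equiv.Perm α} (hρ : IsTransversal L ρ)
    (hρτ : ∀ a, ρ a ≠ τ a) : IsTransversal (prolong L τ) ρ.optionCongr := by
  rintro (_ | a) (_ | b) h <;> simp only [prolong, Equiv.optionCongr_apply, Option.map] at h <;>
    simp_all [hρ.eq_iff]

end LatinSquare

theorem isLatinSquare_add (G : Type*) [Add G] [IsCancelAdd G] :
    IsLatinSquare fun a b : G => a + b :=
  ⟨add_right_injective, add_left_injective⟩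

theorem ZMod.isTransversal_add_addRight {n : ℕ} (hn : Odd n) (c : ZMod n) :
    IsTransversal (fun a b : ZMod n => a + b) (Equiv.addRight c) := by
  have h2 : IsUnit (2 : ZMod n) := by
    exact_mod_cast (ZMod.isUnit_iff_coprime 2 n).mpr (Nat.coprime_two_left.mpr hn)
  intro x y h
  simp only [Equiv.coe_addRight] at h
  exact h2.mul_left_cancel (by linear_combination h)

theorem exists_isLatinSquare_isTransversal {m : ℕ} (hm : m ≠ 2) :
    ∃ L : Fin m → Fin m → Fin m, IsLatinSquare L ∧ ∃ σ, IsTransversal L σ := by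
  suffices ∃ (α : Type) (e : α ≃ Fin m) (L : α → α → α), IsLatinSquare L ∧
      ∃ σ, IsTransversal L σ by
    obtain ⟨α, e, L, hL, σ, hσ⟩ := this
    exact ⟨_, hL.congr e e, _, hσ.congr e e⟩
  rcases Nat.even_or_odd m with ⟨k, rfl⟩ | hodd
  · rcases Nat.lt_or_ge k 2 with hk | hk
    · obtain rfl : k = 0 := by omega
      exact ⟨Fin 0, Equiv.refl _, fun a _ => a, ⟨fun a => a.elim0, fun a => a.elim0⟩, 1,
        fun a => a.elim0⟩
    · obtain ⟨n, hn, hnk⟩ : ∃ n, Odd n ∧ k + k = n + 1 :=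
        ⟨k + k - 1, ⟨k - 1, by omega⟩, by omega⟩
      have : NeZero n := ⟨by omega⟩
      have : Fact (1 < n) := ⟨by omega⟩
      exact ⟨Option (ZMod n), Fintype.equivFinOfCardEq (by simp [ZMod.card, hnk]), _,
        isLatinSquare_prolong (isLatinSquare_add _) (ZMod.isTransversal_add_addRight hn 0), _,
        isTransversal_prolong (ZMod.isTransversal_add_addRight hn 1) fun _ => by simp⟩
  · have : NeZero m := ⟨hodd.pos.ne'⟩
    exact ⟨ZMod m, (ZMod.finEquiv m).symm.toEquiv, _, isLatinSquare_add _, _,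
      ZMod.isTransversal_add_addRight hodd 0⟩

theorem Kmm_edgeColoring_rainbow_matching (m : ℕ) (hm : 3 ≤ m) :
    ∃ (ce : (Fin m ⊕ Fin m) → (Fin m ⊕ Fin m) → Fin m) (σ : Equiv.Perm (Fin m)),
      IsEdgeColoring (completeBipartiteGraph (Fin m) (Fin m)) m ce ∧
      Function.Injective (fun k => ce (Sum.inl k) (Sum.inr (σ k))) := by
  obtain ⟨L, hL, σ, hσ⟩ := exists_isLatinSquare_isTransversal (by omega : m ≠ 2)
  exact ⟨bipartiteColoring L, σ, hL.isEdgeColoring_bipartiteColoring, hσ⟩
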